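/- If G is a graph with diameter at least 5, then λ_g(G) = λ(G). -/

import Mathlib

variable {V : Type*}

/-- `S` is a dominating set of `G`: every vertex outside `S` has a neighbor in `S`. -/
def IsDominatingSet (G : SimpleGraph V) (S : Set V) : Prop :=
  ∀ v ∉ S, (G.neighborSet v ∩ S).Nonempty

/-- `S` is a locating-dominating set of `G`. -/
def IsLDSet (G : SimpleGraph V) (S : Set V) : Prop :=
  IsDominatingSet G S ∧
    ∀ u ∉ S, ∀ v ∉ S, G.neighborSet u ∩ S = G.neighborSet v ∩ S → u = v

/-- The location-domination number of `G`. -/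
noncomputable def ldNum [Fintype V] (G : SimpleGraph V) : ℕ :=
  sInf {n | ∃ S : Set V, IsLDSet G S ∧ S.ncard = n}

/-- `S` is a global LD-set of `G`: an LD-set of both `G` and its complement. -/
def IsGlobalLDSet (G : SimpleGraph V) (S : Set V) : Prop :=
  IsLDSet G S ∧ IsLDSet Gᶜ S

/-- The global location-domination number of `G`. -/
noncomputable def gldNum [Fintype V] (G : SimpleGraph V) : ℕ :=
  sInf {n | ∃ S : Set V, IsGlobalLDSet G S ∧ S.ncard = n}

/-!
A vertex `v ∉ S` with no `Gᶜ`-neighbour in `S` is adjacent in `G` to all of `S`; as `S`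
dominates `G`, every vertex is then within distance two of `v`, so the diameter is at most four. Hence under the diameter assumption every LD-set of `G` dominates `Gᶜ`, and it locates
there as well, since `Gᶜ.neighborSet u ∩ S = S \ G.neighborSet u` for `u ∉ S`.
-/

open SimpleGraph

variable {G : SimpleGraph V} {S : Set V}

lemma compl_neighborSet_inter_of_notMem {u : V} (hu : u ∉ S) :
    Gᶜ.neighborSet u ∩ S = S \ G.neighborSet u := by
  ext s
  simp only [Set.mem_inter_iff, mem_neighborSet, compl_adj, Set.mem_sdiff]
  exact ⟨fun ⟨⟨_, hna⟩, hs⟩ => ⟨hs, hna⟩,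
    fun ⟨hs, hna⟩ => ⟨⟨fun heq => hu (heq ▸ hs), hna⟩, hs⟩⟩

lemma IsDominatingSet.edist_le_two_of_forall_adj (hS : IsDominatingSet G S) {v : V}
    (hadj : ∀ s ∈ S, G.Adj v s) (u : V) : G.edist u v ≤ 2 := by
  by_cases hu : u ∈ S
  · exact (edist_eq_one_iff_adj.mpr (hadj u hu).symm).trans_le one_le_two
  · obtain ⟨s, hus, hs⟩ := hS u hu
    calc G.edist u v ≤ G.edist u s + G.edist s v := G.edist_triangle
      _ = 2 := by
        rw [edist_eq_one_iff_adj.mpr hus, edist_eq_one_iff_adj.mpr (hadj s hs).symm]; rfl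

lemma IsDominatingSet.compl (hS : IsDominatingSet G S) {x y : V} (hxy : 5 ≤ G.dist x y) :
    IsDominatingSet Gᶜ S := by
  intro v hv
  by_contra hempty
  rw [Set.not_nonempty_iff_eq_empty, compl_neighborSet_inter_of_notMem hv,
    Set.sdiff_eq_empty] at hempty
  have hle := hS.edist_le_two_of_forall_adj hempty
  have hxy_le : G.edist x y ≤ 4 :=
    calc G.edist x y ≤ G.edist x v + G.edist v y := G.edist_triangle
      _ ≤ 2 + 2 := add_le_add (hle x) (edist_comm.trans_le (hle y))
      _ = 4 := rfl
  have : G.dist x y ≤ 4 := ENat.toNat_le_toNat hxy_le (by simp)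
  omega

lemma IsLDSet.compl (hS : IsLDSet G S) {x y : V} (hxy : 5 ≤ G.dist x y) : IsLDSet Gᶜ S := by
  refine ⟨hS.1.compl hxy, fun u hu v hv huv => hS.2 u hu v hv ?_⟩
  rw [compl_neighborSet_inter_of_notMem hu, compl_neighborSet_inter_of_notMem hv] at huv
  simpa only [sdiff_sdiff_right_self, Set.inf_eq_inter, Set.inter_comm S] using
    congrArg (S \ ·) huv

lemma isGlobalLDSet_iff_isLDSet {x y : V} (hxy : 5 ≤ G.dist x y) :
    IsGlobalLDSet G S ↔ IsLDSet G S :=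
  ⟨And.left, fun hS => ⟨hS, hS.compl hxy⟩⟩

theorem stmt14_general [Fintype V] (G : SimpleGraph V)
    (x y : V) (h : 5 ≤ G.dist x y) :
    gldNum G = ldNum G := by
  simp only [gldNum, ldNum, isGlobalLDSet_iff_isLDSet h]

theorem stmt14 [Fintype V] (G : SimpleGraph V) (hconn : G.Connected)
    (x y : V) (h : 5 ≤ G.dist x y) :
    gldNum G = ldNum G :=
  stmt14_general G x y h
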